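/- For convex Φ and finite random variables X, Y: I_Φ(X; Y) ≤ min(I_Φ(X; X), I_Φ(Y; Y)). -/
import Mathlib


open Finset

variable {Ω : Type*}

/-- Marginal pmf of a random variable `X` under the pmf `p`. -/
noncomputable def marg [Fintype Ω] {α : Type*} [DecidableEq α]
    (p : Ω → ℝ) (X : Ω → α) (x : α) : ℝ :=
  ∑ ω, if X ω = x then p ω else 0

/-- The Φ-mutual information
`I_Φ(X;Y) = Σ_{x,y} p(x) p(y) Φ(p(x,y)/(p(x)p(y))) − Φ(1)`. -/
noncomputable def miPhi [Fintype Ω] {α β : Type*} [Fintype α] [DecidableEq α]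
    [Fintype β] [DecidableEq β] (Φ : ℝ → ℝ) (p : Ω → ℝ) (X : Ω → α) (Y : Ω → β) : ℝ :=
  (∑ x, ∑ y, marg p X x * marg p Y y *
      Φ (marg p (fun ω => (X ω, Y ω)) (x, y) / (marg p X x * marg p Y y))) - Φ 1

lemma marg_nonneg [Fintype Ω] {α : Type*} [DecidableEq α]
    (p : Ω → ℝ) (hp0 : ∀ ω, 0 ≤ p ω) (X : Ω → α) (x : α) : 0 ≤ marg p X x := by
  apply Finset.sum_nonneg
  intro ω _
  split
  · exact hp0 ω
  · exact le_refl 0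

lemma sum_marg [Fintype Ω] {α : Type*} [Fintype α] [DecidableEq α]
    (p : Ω → ℝ) (hp1 : ∑ ω, p ω = 1) (X : Ω → α) : ∑ x, marg p X x = 1 := by
  unfold marg
  rw [Finset.sum_comm]
  rw [← hp1]
  apply Finset.sum_congr rfl
  intro ω _
  simp

lemma marg_pair_fst [Fintype Ω] {α β : Type*} [Fintype α] [DecidableEq α]
    [Fintype β] [DecidableEq β] (p : Ω → ℝ) (X : Ω → α) (Y : Ω → β) (x : α) :
    ∑ y, marg p (fun ω => (X ω, Y ω)) (x, y) = marg p X x := by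
  unfold marg
  rw [Finset.sum_comm]
  apply Finset.sum_congr rfl
  intro ω _
  by_cases h : X ω = x <;> simp [Prod.ext_iff, h]

lemma marg_pair_snd [Fintype Ω] {α β : Type*} [Fintype α] [DecidableEq α]
    [Fintype β] [DecidableEq β] (p : Ω → ℝ) (X : Ω → α) (Y : Ω → β) (y : β) :
    ∑ x, marg p (fun ω => (X ω, Y ω)) (x, y) = marg p Y y := by
  unfold marg
  rw [Finset.sum_comm]
  apply Finset.sum_congr rfl
  intro ω _
  by_cases h : Y ω = y <;> simp [Prod.ext_iff, h]

lemma marg_pair_le_fst [Fintype Ω] {α β : Type*} [DecidableEq α]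
    [DecidableEq β] (p : Ω → ℝ) (hp0 : ∀ ω, 0 ≤ p ω) (X : Ω → α) (Y : Ω → β) (x : α) (y : β) :
    marg p (fun ω => (X ω, Y ω)) (x, y) ≤ marg p X x := by
  apply Finset.sum_le_sum
  intro ω _
  by_cases h : (X ω, Y ω) = (x, y)
  · rw [if_pos h, if_pos (congrArg Prod.fst h)]
  · rw [if_neg h]
    split
    · exact hp0 ω
    · exact le_refl 0

lemma marg_pair_le_snd [Fintype Ω] {α β : Type*} [DecidableEq α]
    [DecidableEq β] (p : Ω → ℝ) (hp0 : ∀ ω, 0 ≤ p ω) (X : Ω → α) (Y : Ω → β) (x : α) (y : β) :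
    marg p (fun ω => (X ω, Y ω)) (x, y) ≤ marg p Y y := by
  apply Finset.sum_le_sum
  intro ω _
  by_cases h : (X ω, Y ω) = (x, y)
  · rw [if_pos h, if_pos (congrArg Prod.snd h)]
  · rw [if_neg h]
    split
    · exact hp0 ω
    · exact le_refl 0

lemma marg_diag [Fintype Ω] {α : Type*} [DecidableEq α]
    (p : Ω → ℝ) (X : Ω → α) (x x' : α) :
    marg p (fun ω => (X ω, X ω)) (x, x') = if x = x' then marg p X x else 0 := by
  unfold marg
  by_cases h : x = x'
  · subst h
    simp [Prod.ext_iff, and_self]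
  · simp only [if_neg h]
    apply Finset.sum_eq_zero
    intro ω _
    rw [if_neg]
    intro he
    obtain ⟨h1, h2⟩ := Prod.mk.inj he
    exact h (h1.symm.trans h2)

/-- Jensen slice: the key convexity estimate. -/
lemma slicePhi (Φ : ℝ → ℝ) (hΦ : ConvexOn ℝ (Set.Ici 0) Φ) {α : Type*} [Fintype α]
    (a : α → ℝ) (ha0 : ∀ x, 0 ≤ a x) (ha1 : ∑ x, a x = 1)
    (J : α → ℝ) (hJ0 : ∀ x, 0 ≤ J x) (hJa : ∀ x, J x ≤ a x)
    (c : ℝ) (hc : 0 ≤ c) (hJc : ∑ x, J x = c) :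
    ∑ x, a x * c * Φ (J x / (a x * c)) ≤ c * c * Φ (c / (c * c)) + c * (1 - c) * Φ 0 := by
  rcases hc.eq_or_lt with h | h
  · simp [← h]
  · have hcne : c ≠ 0 := ne_of_gt h
    have hdiag : c / (c * c) = 1 / c := by field_simp
    have key : ∀ x, a x * c * Φ (J x / (a x * c)) ≤
        c * (J x * Φ (1 / c) + (a x - J x) * Φ 0) := by
      intro x
      rcases (ha0 x).eq_or_lt with hax | hax
      · have hJx : J x = 0 := le_antisymm (hax ▸ hJa x) (hJ0 x)
        simp [← hax, hJx]
      · have haxne : a x ≠ 0 := ne_of_gt hax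
        set t := J x / a x with ht
        have ht0 : 0 ≤ t := div_nonneg (hJ0 x) (le_of_lt hax)
        have ht1 : t ≤ 1 := (div_le_one hax).mpr (hJa x)
        have harg : J x / (a x * c) = t * (1 / c) + (1 - t) * 0 := by
          rw [mul_zero, add_zero, ht, div_mul_div_comm, mul_one]
        have h1c : (1 : ℝ) / c ∈ Set.Ici (0 : ℝ) := by
          simp only [Set.mem_Ici]; positivity
        have h0c : (0 : ℝ) ∈ Set.Ici (0 : ℝ) := Set.self_mem_Ici
        have hcx : Φ (t • (1 / c) + (1 - t) • (0 : ℝ)) ≤ t • Φ (1 / c) + (1 - t) • Φ 0 :=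
          hΦ.2 h1c h0c ht0 (by linarith) (by ring)
        rw [smul_eq_mul, smul_eq_mul, smul_eq_mul, smul_eq_mul] at hcx
        rw [harg]
        have hat : a x * t = J x := by rw [ht]; field_simp
        have hat' : a x * (1 - t) = a x - J x := by rw [mul_sub, mul_one, hat]
        calc a x * c * Φ (t * (1 / c) + (1 - t) * 0)
            ≤ a x * c * (t * Φ (1 / c) + (1 - t) * Φ 0) :=
              mul_le_mul_of_nonneg_left hcx (mul_nonneg (ha0 x) hc)
          _ = c * (a x * t * Φ (1 / c) + a x * (1 - t) * Φ 0) := by ring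
          _ = c * (J x * Φ (1 / c) + (a x - J x) * Φ 0) := by rw [hat, hat']
    calc ∑ x, a x * c * Φ (J x / (a x * c))
        ≤ ∑ x, c * (J x * Φ (1 / c) + (a x - J x) * Φ 0) :=
          Finset.sum_le_sum fun x _ => key x
      _ = c * (c * Φ (1 / c) + (1 - c) * Φ 0) := by
          rw [← Finset.mul_sum]
          congr 1
          rw [Finset.sum_add_distrib, ← Finset.sum_mul, ← Finset.sum_mul, hJc,
            Finset.sum_sub_distrib, ha1, hJc]
      _ = c * c * Φ (c / (c * c)) + c * (1 - c) * Φ 0 := by rw [hdiag]; ring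

lemma halfPhi (Φ : ℝ → ℝ) (hΦ : ConvexOn ℝ (Set.Ici 0) Φ) {α β : Type*}
    [Fintype α] [Fintype β] [DecidableEq β]
    (a : α → ℝ) (b : β → ℝ) (J : α → β → ℝ)
    (ha0 : ∀ x, 0 ≤ a x) (ha1 : ∑ x, a x = 1)
    (hb0 : ∀ y, 0 ≤ b y) (hb1 : ∑ y, b y = 1)
    (hJ0 : ∀ x y, 0 ≤ J x y) (hJa : ∀ x y, J x y ≤ a x)
    (hJb : ∀ y, ∑ x, J x y = b y) :
    ∑ y, ∑ x, a x * b y * Φ (J x y / (a x * b y)) ≤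
      ∑ y, ∑ y', b y * b y' * Φ ((if y = y' then b y else 0) / (b y * b y')) := by
  apply Finset.sum_le_sum
  intro y _
  have inner : ∑ y', b y * b y' * Φ ((if y = y' then b y else 0) / (b y * b y')) =
      b y * b y * Φ (b y / (b y * b y)) + b y * (1 - b y) * Φ 0 := by
    rw [← Finset.add_sum_erase _ _ (Finset.mem_univ y)]
    rw [if_pos rfl]
    congr 1
    rw [Finset.sum_congr rfl (fun y' hy' => by
      rw [if_neg (Ne.symm (Finset.ne_of_mem_erase hy')), zero_div])]
    have herase : ∑ y' ∈ Finset.univ.erase y, b y' = 1 - b y := by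
      rw [Finset.sum_erase_eq_sub (Finset.mem_univ y), hb1]
    calc ∑ y' ∈ Finset.univ.erase y, b y * b y' * Φ 0
        = b y * (∑ y' ∈ Finset.univ.erase y, b y') * Φ 0 := by
          rw [Finset.mul_sum, Finset.sum_mul]
      _ = b y * (1 - b y) * Φ 0 := by rw [herase]
  rw [inner]
  exact slicePhi Φ hΦ a ha0 ha1 (fun x => J x y) (fun x => hJ0 x y) (fun x => hJa x y)
    (b y) (hb0 y) (hJb y)

/-- `I_Φ(X;Y) ≤ min(I_Φ(X;X), I_Φ(Y;Y))`. -/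
theorem miPhi_le_min [Fintype Ω] {α β : Type*} [Fintype α] [DecidableEq α]
    [Fintype β] [DecidableEq β]
    (Φ : ℝ → ℝ) (hΦ : ConvexOn ℝ (Set.Ici 0) Φ)
    (p : Ω → ℝ) (hp0 : ∀ ω, 0 ≤ p ω) (hp1 : ∑ ω, p ω = 1)
    (X : Ω → α) (Y : Ω → β) :
    miPhi Φ p X Y ≤ min (miPhi Φ p X X) (miPhi Φ p Y Y) := by
  have haX0 := marg_nonneg p hp0 X
  have haY0 := marg_nonneg p hp0 Y
  have haX1 := sum_marg p hp1 X
  have haY1 := sum_marg p hp1 Y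
  have hJ0 : ∀ (x : α) (y : β), 0 ≤ marg p (fun ω => (X ω, Y ω)) (x, y) :=
    fun x y => marg_nonneg p hp0 _ _
  apply le_min
  · -- miPhi Φ p X Y ≤ miPhi Φ p X X
    unfold miPhi
    apply sub_le_sub_right
    simp only [marg_diag]
    have comm : ∀ (x : α) (y : β),
        marg p X x * marg p Y y *
          Φ (marg p (fun ω => (X ω, Y ω)) (x, y) / (marg p X x * marg p Y y)) =
        marg p Y y * marg p X x *
          Φ (marg p (fun ω => (X ω, Y ω)) (x, y) / (marg p Y y * marg p X x)) := by
      intro x y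
      rw [mul_comm (marg p X x) (marg p Y y)]
    calc ∑ x, ∑ y, marg p X x * marg p Y y *
          Φ (marg p (fun ω => (X ω, Y ω)) (x, y) / (marg p X x * marg p Y y))
        = ∑ x, ∑ y, marg p Y y * marg p X x *
          Φ (marg p (fun ω => (X ω, Y ω)) (x, y) / (marg p Y y * marg p X x)) := by
          exact Finset.sum_congr rfl fun x _ => Finset.sum_congr rfl fun y _ => comm x y
      _ ≤ ∑ x, ∑ x', marg p X x * marg p X x' *
          Φ ((if x = x' then marg p X x else 0) / (marg p X x * marg p X x')) :=
          halfPhi Φ hΦ (marg p Y) (marg p X) (fun y x => marg p (fun ω => (X ω, Y ω)) (x, y))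
            haY0 haY1 haX0 haX1 (fun y x => hJ0 x y)
            (fun y x => marg_pair_le_snd p hp0 X Y x y)
            (fun x => marg_pair_fst p X Y x)
  · -- miPhi Φ p X Y ≤ miPhi Φ p Y Y
    unfold miPhi
    apply sub_le_sub_right
    simp only [marg_diag]
    rw [Finset.sum_comm]
    exact halfPhi Φ hΦ (marg p X) (marg p Y) (fun x y => marg p (fun ω => (X ω, Y ω)) (x, y))
      haX0 haX1 haY0 haY1 hJ0
      (fun x y => marg_pair_le_fst p hp0 X Y x y)
      (fun y => marg_pair_snd p X Y y)
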